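/- arXiv:2108.05982 — 7 statements merged into one kernel-verified Lean document; each statement's English description precedes it below -/
import Mathlib

section
/- With the notation of the syndrome-polynomial setup: if additionally α^{i_s} ≠ 1 for all 1 ≤ s ≤ r−1, then D_0 = (Σ_{u=0}^{r−1} S_u g_{r−u−1}) / (Σ_{u=0}^{r−1} g_u), i.e., the secret symbol D_0 is recovered as the quotient of the linear combination of syndromes with coefficients g by the sum of all coefficients of G. -/
/-- recovery of the secret:
D_0 = (Σ_u S_u g_{r-u-1}) / (Σ_u g_u), when α^{i_s} ≠ 1 for s ≥ 1. -/
theorem stmt_5 {F : Type*} [Field F] [CharP F 2] {r : ℕ} (hr : 0 < r)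
    (α : F) (i : Fin r → ℕ) (hi0 : i ⟨0, hr⟩ = 0)
    (hdist : Function.Injective (fun s : Fin r => α ^ i s))
    (hne1 : ∀ s : Fin r, s ≠ ⟨0, hr⟩ → α ^ i s ≠ 1)
    (D : Fin r → F)
    (S : Fin r → F) (hS : ∀ u : Fin r, S u = ∑ s : Fin r, α ^ ((u : ℕ) * i s) * D s)
    (G : Polynomial F)
    (hG : G = ∏ s ∈ Finset.univ.erase (⟨0, hr⟩ : Fin r),
      (Polynomial.X + Polynomial.C (α ^ i s)))
    (g : ℕ → F) (hg : ∀ m, g m = G.coeff (r - 1 - m)) :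
    D ⟨0, hr⟩ = (∑ u : Fin r, S u * g (r - (u : ℕ) - 1)) / (∑ u ∈ Finset.range r, g u) := by
  set z : Fin r := ⟨0, hr⟩ with hz
  have hdeg : G.natDegree < r := by
    rw [hG]
    refine (Polynomial.natDegree_prod_le _ _).trans_lt ?_
    have hsum : ∑ s ∈ Finset.univ.erase z, (Polynomial.X + Polynomial.C (α ^ i s)).natDegree
        = (Finset.univ.erase z).card := by
      rw [Finset.sum_congr rfl fun s _ => Polynomial.natDegree_X_add_C (α ^ i s)]
      simp
    have hcard : (Finset.univ.erase z).card = r - 1 := by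
      simp [Finset.card_erase_of_mem]
    omega
  have heval : ∀ x : F, G.eval x = ∑ u : Fin r, x ^ (u : ℕ) * G.coeff u := by
    intro x
    rw [Polynomial.eval_eq_sum_range' hdeg x,
      ← Fin.sum_univ_eq_sum_range (fun u => G.coeff u * x ^ u) r]
    exact Finset.sum_congr rfl fun u _ => mul_comm _ _
  have hroot : ∀ s : Fin r, s ≠ z → G.eval (α ^ i s) = 0 := by
    intro s hs
    rw [hG]
    simp only [Polynomial.eval_prod, Polynomial.eval_add, Polynomial.eval_X, Polynomial.eval_C]
    exact Finset.prod_eq_zero (Finset.mem_erase.mpr ⟨hs, Finset.mem_univ s⟩)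
      (CharTwo.add_self_eq_zero _)
  have hE1 : G.eval 1 ≠ 0 := by
    rw [hG]
    simp only [Polynomial.eval_prod, Polynomial.eval_add, Polynomial.eval_X, Polynomial.eval_C]
    refine Finset.prod_ne_zero_iff.mpr fun t ht h => ?_
    apply hne1 t (Finset.mem_erase.mp ht).1
    have h1 : α ^ i t = -1 := eq_neg_of_add_eq_zero_right h
    rw [h1, CharTwo.neg_eq]
  have hgcoeff : ∀ u : Fin r, g (r - (u : ℕ) - 1) = G.coeff u := by
    intro u
    rw [hg]
    congr 1
    omega
  have hgsum : ∑ u ∈ Finset.range r, g u = G.eval 1 := by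
    have : ∀ u ∈ Finset.range r, g u = G.coeff (r - 1 - u) := fun u _ => hg u
    rw [Finset.sum_congr rfl this, Finset.sum_range_reflect (fun u => G.coeff u) r,
      heval 1]
    simp [Fin.sum_univ_eq_sum_range (fun u => G.coeff u) r]
  have hnum : ∑ u : Fin r, S u * g (r - (u : ℕ) - 1) = D z * G.eval 1 := by
    calc ∑ u : Fin r, S u * g (r - (u : ℕ) - 1)
        = ∑ u : Fin r, ∑ s : Fin r, (α ^ i s) ^ (u : ℕ) * G.coeff u * D s := by
          refine Finset.sum_congr rfl fun u _ => ?_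
          rw [hS u, hgcoeff u, Finset.sum_mul]
          refine Finset.sum_congr rfl fun s _ => ?_
          rw [mul_comm (u : ℕ) (i s), pow_mul]
          ring
      _ = ∑ s : Fin r, D s * G.eval (α ^ i s) := by
          rw [Finset.sum_comm]
          refine Finset.sum_congr rfl fun s _ => ?_
          rw [heval (α ^ i s), Finset.mul_sum]
          exact Finset.sum_congr rfl fun u _ => by ring
      _ = D z * G.eval 1 := by
          rw [Finset.sum_eq_single z]
          · rw [hi0, pow_zero]
          · intro s _ hs
            rw [hroot s hs, mul_zero]
          · intro h
            exact absurd (Finset.mem_univ z) h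
  rw [hnum, hgsum, mul_div_cancel_right₀ _ hE1]
end

section
/- In the modified Shamir scheme over GF(q): let D_0 be the secret and D_1, ..., D_{k−1} be independent uniformly random elements of GF(q), and let the parities be D_{k+u} = Σ_{j=0}^{k−1} α^{uj} D_j for 0 ≤ u ≤ r−1 (H an r×k parity-check matrix of an MDS code). Then knowledge of the r parity symbols D_k,...,D_{k+r−1} together with any k−r−1 of the symbols D_1,...,D_{k−1} gives no information about D_0; formally, conditioned on any such k−r−1 data symbols and the r parities, the distribution of D_0 is uniform on GF(q). -/
/-- perfect secrecy of the modified Shamir scheme.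
Conditioned on any k-r-1 data symbols (not including the secret) and the r
parities, every value of the secret D_0 is equally likely: the number of data
vectors consistent with the observation and secret value d equals the number
consistent with the observation and secret value d'. -/
theorem stmt_6 {F : Type*} [Field F] [Fintype F] [DecidableEq F] {r k : ℕ}
    (hrk : r < k) (hk : 0 < k)
    (α : F) (H : Matrix (Fin r) (Fin k) F)
    (hH : ∀ u j, H u j = α ^ ((u : ℕ) * (j : ℕ)))
    (hMDS : ∀ cols : Fin r → Fin k, Function.Injective cols →
      IsUnit (H.submatrix id cols).det)
    (J : Finset (Fin k)) (hJ0 : (⟨0, hk⟩ : Fin k) ∉ J) (hJcard : J.card = k - r - 1)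
    (obs : Fin k → F) (par : Fin r → F) (d d' : F) :
    (Finset.univ.filter (fun D : Fin k → F =>
        D ⟨0, hk⟩ = d ∧ (∀ j ∈ J, D j = obs j) ∧
        ∀ u : Fin r, ∑ j : Fin k, α ^ ((u : ℕ) * (j : ℕ)) * D j = par u)).card
      = (Finset.univ.filter (fun D : Fin k → F =>
        D ⟨0, hk⟩ = d' ∧ (∀ j ∈ J, D j = obs j) ∧
        ∀ u : Fin r, ∑ j : Fin k, α ^ ((u : ℕ) * (j : ℕ)) * D j = par u)).card := by
  classical
  set z : Fin k := ⟨0, hk⟩ with hz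
  set ins : Finset (Fin k) := insert z J with hins
  have hinsCard : ins.card = k - r := by
    rw [hins, Finset.card_insert_of_notMem hJ0, hJcard]; omega
  set S : Finset (Fin k) := insᶜ with hSdef
  have hScard : S.card = r := by
    rw [hSdef, Finset.card_compl, hinsCard, Fintype.card_fin]; omega
  set e : ↥S ≃ Fin r := S.equivFinOfCardEq hScard with he
  set cols : Fin r → Fin k := fun i => ((e.symm i : ↥S) : Fin k) with hcols
  have hcolsInj : Function.Injective cols := fun a b h => by
    have := Subtype.ext (p := fun j => j ∈ S) h
    exact e.symm.injective this
  have hcolsMem : ∀ i, cols i ∈ S := fun i => (e.symm i).2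
  set M : Matrix (Fin r) (Fin r) F := H.submatrix id cols with hM
  have hMdet : IsUnit M.det := hMDS cols hcolsInj
  -- reindexing lemma for sums over S
  have hsum : ∀ (u : Fin r) (g : Fin k → F),
      ∑ j ∈ S, α ^ ((u : ℕ) * (j : ℕ)) * g j = ∑ i : Fin r, M u i * g (cols i) := by
    intro u g
    calc ∑ j ∈ S, α ^ ((u : ℕ) * (j : ℕ)) * g j
        = ∑ s : ↥S, α ^ ((u : ℕ) * ((s : Fin k) : ℕ)) * g s :=
          (Finset.sum_coe_sort S _).symm
      _ = ∑ i : Fin r, α ^ ((u : ℕ) * ((cols i) : ℕ)) * g (cols i) :=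
          (Equiv.sum_comp e.symm
            (fun s : ↥S => α ^ ((u : ℕ) * ((s : Fin k) : ℕ)) * g s)).symm
      _ = ∑ i : Fin r, M u i * g (cols i) := by
          refine Finset.sum_congr rfl fun i _ => ?_
          rw [hM, Matrix.submatrix_apply, id, hH]
  have hsplit : ∀ (u : Fin r) (g : Fin k → F),
      ∑ j : Fin k, α ^ ((u : ℕ) * (j : ℕ)) * g j
        = (∑ j ∈ ins, α ^ ((u : ℕ) * (j : ℕ)) * g j)
          + ∑ i : Fin r, M u i * g (cols i) := by
    intro u g
    rw [← hsum u g, ← Finset.sum_add_sum_compl ins (fun j => α ^ ((u : ℕ) * (j : ℕ)) * g j)]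
  -- the key: each filter has exactly one element
  have key : ∀ c : F, (Finset.univ.filter (fun D : Fin k → F =>
      D z = c ∧ (∀ j ∈ J, D j = obs j) ∧
      ∀ u : Fin r, ∑ j : Fin k, α ^ ((u : ℕ) * (j : ℕ)) * D j = par u)).card = 1 := by
    intro c
    rw [Finset.card_eq_one]
    set f : Fin k → F := fun j => if j = z then c else obs j with hf
    set b : Fin r → F := fun u =>
      par u - ∑ j ∈ ins, α ^ ((u : ℕ) * (j : ℕ)) * f j with hb
    set x : Fin r → F := M⁻¹.mulVec b with hx
    set D0 : Fin k → F := fun j => if h : j ∈ S then x (e ⟨j, h⟩) else f j with hD0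
    have hD0cols : ∀ i, D0 (cols i) = x i := by
      intro i
      have h := hcolsMem i
      simp only [hD0, dif_pos h]
      congr 1
      have : (⟨cols i, h⟩ : ↥S) = e.symm i := Subtype.ext rfl
      rw [this, Equiv.apply_symm_apply]
    have hD0ins : ∀ j ∈ ins, D0 j = f j := by
      intro j hj
      have hns : j ∉ S := by rw [hSdef]; simp [hj]
      simp only [hD0, dif_neg hns]
    have hD0z : D0 z = c := by
      rw [hD0ins z (Finset.mem_insert_self _ _), hf]; simp
    have hD0J : ∀ j ∈ J, D0 j = obs j := by
      intro j hj
      rw [hD0ins j (Finset.mem_insert_of_mem hj)]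
      have hne : j ≠ z := fun h => hJ0 (h ▸ hj)
      simp only [hf, if_neg hne]
    have hMx : M.mulVec x = b := by
      rw [hx, Matrix.mulVec_mulVec, Matrix.mul_nonsing_inv M hMdet, Matrix.one_mulVec]
    have hD0par : ∀ u : Fin r,
        ∑ j : Fin k, α ^ ((u : ℕ) * (j : ℕ)) * D0 j = par u := by
      intro u
      rw [hsplit u D0]
      have h1 : ∑ j ∈ ins, α ^ ((u : ℕ) * (j : ℕ)) * D0 j
          = ∑ j ∈ ins, α ^ ((u : ℕ) * (j : ℕ)) * f j :=
        Finset.sum_congr rfl fun j hj => by rw [hD0ins j hj]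
      have h2 : ∑ i : Fin r, M u i * D0 (cols i) = b u := by
        have : ∑ i : Fin r, M u i * D0 (cols i) = ∑ i : Fin r, M u i * x i :=
          Finset.sum_congr rfl fun i _ => by rw [hD0cols i]
        rw [this]
        have := congrFun hMx u
        rw [← this]
        rfl
      rw [h1, h2, hb]
      ring
    refine ⟨D0, Finset.eq_singleton_iff_unique_mem.mpr ⟨?_, ?_⟩⟩
    · simp only [Finset.mem_filter, Finset.mem_univ, true_and]
      exact ⟨hD0z, hD0J, hD0par⟩
    · intro D hD
      simp only [Finset.mem_filter, Finset.mem_univ, true_and] at hD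
      obtain ⟨hDz, hDJ, hDpar⟩ := hD
      -- show D = D0
      have hDins : ∀ j ∈ ins, D j = f j := by
        intro j hj
        rcases Finset.mem_insert.mp hj with rfl | hj'
        · simp only [hf, if_pos]; exact hDz
        · have hne : j ≠ z := fun h => hJ0 (h ▸ hj')
          simp only [hf, if_neg hne]; exact hDJ j hj'
      set y : Fin r → F := fun i => D (cols i) - D0 (cols i) with hy
      have hMy : M.mulVec y = 0 := by
        funext u
        have h1 := hsplit u D
        have h2 := hsplit u D0
        rw [hDpar u] at h1
        rw [hD0par u] at h2
        have h3 : ∑ j ∈ ins, α ^ ((u : ℕ) * (j : ℕ)) * D j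
            = ∑ j ∈ ins, α ^ ((u : ℕ) * (j : ℕ)) * D0 j :=
          Finset.sum_congr rfl fun j hj => by rw [hDins j hj, hD0ins j hj]
      
        have : ∑ i : Fin r, M u i * D (cols i) = ∑ i : Fin r, M u i * D0 (cols i) := by
          have := h1.symm.trans h2
          rw [h3] at this
          exact add_left_cancel this
        have hval : (M.mulVec y) u
            = ∑ i : Fin r, M u i * D (cols i) - ∑ i : Fin r, M u i * D0 (cols i) := by
          simp only [Matrix.mulVec, dotProduct, hy, mul_sub, Finset.sum_sub_distrib]
        rw [hval, this, sub_self]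
        rfl
      have hy0 : y = 0 := by
        have : M⁻¹.mulVec (M.mulVec y) = y := by
          rw [Matrix.mulVec_mulVec, Matrix.nonsing_inv_mul M hMdet, Matrix.one_mulVec]
        rw [hMy, Matrix.mulVec_zero] at this
        exact this.symm
      funext j
      by_cases hj : j ∈ S
      · have hjc : cols (e ⟨j, hj⟩) = j := by
          rw [hcols]
          simp
        have := congrFun hy0 (e ⟨j, hj⟩)
        rw [hy] at this
        simp only [hjc, Pi.zero_apply] at this
        exact sub_eq_zero.mp this
      · have hj' : j ∈ ins := by
          by_contra hja
          exact hj (Finset.mem_compl.mpr hja)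
        rw [hDins j hj', hD0ins j hj']
  rw [key d, key d']
end

section
/- Let p be a prime and M_p(x) = 1 + x + x^2 + ... + x^{p−1} over GF(2), and let R = GF(2)[x]/(M_p(x)) with α the image of x. For 1 ≤ j ≤ p−1, the element 1 + α^j is invertible in R. -/
/-- in R = GF(2)[x]/(M_p(x)), M_p(x) = 1 + x + ... + x^{p-1},
the element 1 + α^j is invertible for 1 ≤ j ≤ p-1. -/
theorem stmt_7 {p : ℕ} (hp : p.Prime) (hodd : Odd p)
    (Mp : Polynomial (ZMod 2)) (hMp : Mp = ∑ i ∈ Finset.range p, Polynomial.X ^ i)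
    (α : Polynomial (ZMod 2) ⧸ Ideal.span {Mp})
    (hα : α = Ideal.Quotient.mk (Ideal.span {Mp}) Polynomial.X)
    (j : ℕ) (hj1 : 1 ≤ j) (hj2 : j ≤ p - 1) :
    IsUnit (1 + α ^ j) := by
  subst hα
  have h2 : (1 : Polynomial (ZMod 2) ⧸ Ideal.span {Mp}) + 1 = 0 := by
    have h2' : ((2:ℕ) : Polynomial (ZMod 2) ⧸ Ideal.span {Mp}) = 0 := by
      rw [← map_natCast (Ideal.Quotient.mk (Ideal.span {Mp})) 2, CharP.cast_eq_zero, map_zero]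
    rw [one_add_one_eq_two]
    exact_mod_cast h2'
  have hneg : ∀ x : Polynomial (ZMod 2) ⧸ Ideal.span {Mp}, -x = x := by
    intro x
    rw [neg_eq_iff_add_eq_zero]
    calc x + x = (1 + 1) * x := by ring
    _ = 0 := by rw [h2, zero_mul]
  have hsub : ∀ x : Polynomial (ZMod 2) ⧸ Ideal.span {Mp}, x - 1 = 1 + x := by
    intro x; rw [sub_eq_add_neg, hneg, add_comm]
  have hMp0 : Ideal.Quotient.mk (Ideal.span {Mp}) Mp = 0 :=
    Ideal.Quotient.eq_zero_iff_mem.mpr (Ideal.subset_span (Set.mem_singleton _))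
  have hev : Mp.eval 1 = 1 := by
    rw [hMp, Polynomial.eval_finset_sum]
    simp only [Polynomial.eval_pow, Polynomial.eval_X, one_pow, Finset.sum_const,
      Finset.card_range, nsmul_eq_mul, mul_one]
    rw [← ZMod.natCast_mod p 2, Nat.odd_iff.mp hodd, Nat.cast_one]
  set α := Ideal.Quotient.mk (Ideal.span {Mp}) Polynomial.X with hα
  have unit1 : IsUnit (1 + α) := by
    obtain ⟨q, hq⟩ := Polynomial.X_sub_C_dvd_sub_C_eval (a := (1 : ZMod 2)) (p := Mp)
    rw [hev, Polynomial.C_1] at hq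
    have h := congrArg (Ideal.Quotient.mk (Ideal.span {Mp})) hq
    rw [map_sub, map_one, hMp0, zero_sub, map_mul, map_sub, map_one, ← hα,
      hneg, hsub] at h
    exact isUnit_of_mul_isUnit_left (h ▸ isUnit_one)
  have hαp : α ^ p = 1 := by
    have h := congrArg (Ideal.Quotient.mk (Ideal.span {Mp}))
      (geom_sum_mul (Polynomial.X : Polynomial (ZMod 2)) p)
    rw [← hMp, map_mul, hMp0, zero_mul, map_sub, map_one, map_pow, ← hα] at h
    linear_combination -h
  have hjp : j.Coprime p := by
    rw [Nat.coprime_comm]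
    refine (Nat.Prime.coprime_iff_not_dvd hp).mpr fun hdvd => ?_
    have := Nat.le_of_dvd (by omega) hdvd
    have := hp.two_le
    omega
  obtain ⟨k, -, hk⟩ := Nat.exists_mul_mod_eq_one_of_coprime hjp hp.one_lt
  have hjk : α ^ (j * k) = α := by
    conv_lhs => rw [← Nat.div_add_mod (j * k) p]
    rw [pow_add, pow_mul, hαp, one_pow, one_mul, hk, pow_one]
  have hg := geom_sum_mul (α ^ j) k
  rw [← pow_mul, hjk, hsub, hsub] at hg
  rw [← hg] at unit1
  exact isUnit_of_mul_isUnit_right unit1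
end

section
/- Let p be prime, R = GF(2)[x]/(M_p(x)) with M_p(x) = 1+x+...+x^{p−1}, and α the image of x. For 0 ≤ i < j ≤ p−1, the element α^i + α^j is invertible in R. -/
-- pairing lemma
lemma sum_pairs {R : Type*} [CommRing R] (β : R) (t : ℕ) :
    ∑ k ∈ Finset.range t, (β^(2*k+1) + β^(2*k+2)) = ∑ i ∈ Finset.range (2*t), β^(i+1) := by
  induction t with
  | zero => simp
  | succ n ih =>
      rw [Finset.sum_range_succ, ih]
      have h2 : 2 * (n+1) = (2*n) + 1 + 1 := by ring
      rw [h2, Finset.sum_range_succ, Finset.sum_range_succ]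
      ring

-- reindexing lemma
lemma sum_pow_mul_eq {R : Type*} [CommRing R] {p : ℕ} (hp : p.Prime) (α : R)
    (hαp : α ^ p = 1) {m : ℕ} (hm : ¬ p ∣ m) :
    ∑ i ∈ Finset.range p, α ^ (m * i) = ∑ i ∈ Finset.range p, α ^ i := by
  have hkey : ∀ k : ℕ, α ^ (k % p) = α ^ k := by
    intro k
    conv_rhs => rw [← Nat.mod_add_div k p]
    rw [pow_add, pow_mul, hαp, one_pow, mul_one]
  have hcop : Nat.Coprime m p := ((hp.coprime_iff_not_dvd).mpr hm).symm
  obtain ⟨m', -, hm'⟩ := Nat.exists_mul_mod_eq_one_of_coprime hcop hp.one_lt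
  have hpos : 0 < p := hp.pos
  have hmodeq : m * m' ≡ 1 [MOD p] := by
    unfold Nat.ModEq
    rw [hm', Nat.mod_eq_of_lt hp.one_lt]
  refine Finset.sum_bij' (fun a _ => (m * a) % p) (fun a _ => (m' * a) % p) ?_ ?_ ?_ ?_ ?_
  · intro a ha; exact Finset.mem_range.mpr (Nat.mod_lt _ hpos)
  · intro a ha; exact Finset.mem_range.mpr (Nat.mod_lt _ hpos)
  · intro a ha
    have ha' : a < p := Finset.mem_range.mp ha
    have : m' * (m * a % p) ≡ a [MOD p] := by
      calc m' * (m * a % p) ≡ m' * (m * a) [MOD p] := Nat.ModEq.mul_left m' (Nat.mod_modEq _ _)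
        _ = (m * m') * a := by ring
        _ ≡ 1 * a [MOD p] := Nat.ModEq.mul_right a hmodeq
        _ = a := one_mul a
    have h := this
    unfold Nat.ModEq at h
    rw [Nat.mod_eq_of_lt ha'] at h
    exact h
  · intro a ha
    have ha' : a < p := Finset.mem_range.mp ha
    have : m * (m' * a % p) ≡ a [MOD p] := by
      calc m * (m' * a % p) ≡ m * (m' * a) [MOD p] := Nat.ModEq.mul_left m (Nat.mod_modEq _ _)
        _ = (m * m') * a := by ring
        _ ≡ 1 * a [MOD p] := Nat.ModEq.mul_right a hmodeq
        _ = a := one_mul a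
    have h := this
    unfold Nat.ModEq at h
    rw [Nat.mod_eq_of_lt ha'] at h
    exact h
  · intro a ha
    exact (hkey (m*a)).symm

/-- in R = GF(2)[x]/(M_p(x)), the element α^i + α^j is invertible
for 0 ≤ i < j ≤ p-1. -/
theorem stmt_8 {p : ℕ} (hp : p.Prime) (hodd : Odd p)
    (Mp : Polynomial (ZMod 2)) (hMp : Mp = ∑ i ∈ Finset.range p, Polynomial.X ^ i)
    (α : Polynomial (ZMod 2) ⧸ Ideal.span {Mp})
    (hα : α = Ideal.Quotient.mk (Ideal.span {Mp}) Polynomial.X)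
    (i j : ℕ) (hij : i < j) (hj : j ≤ p - 1) :
    IsUnit (α ^ i + α ^ j) := by
  have hMp0 : Ideal.Quotient.mk (Ideal.span {Mp}) Mp = 0 :=
    Ideal.Quotient.eq_zero_iff_mem.mpr (Ideal.mem_span_singleton_self Mp)
  have hsum : ∑ k ∈ Finset.range p, α ^ k = 0 := by
    have h : Ideal.Quotient.mk (Ideal.span {Mp}) (∑ i ∈ Finset.range p, Polynomial.X ^ i) = 0 := by
      rw [← hMp]; exact hMp0
    simpa [map_sum, map_pow, hα] using h
  have hαp : α ^ p = 1 := by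
    have h := geom_sum_mul α p
    rw [hsum, zero_mul] at h
    linear_combination -h
  set m := j - i with hm
  have hmpos : 0 < m := Nat.sub_pos_of_lt hij
  have hjm : j = i + m := by omega
  have hjp : j < p := by have := hp.two_le; omega
  have hmlt : m < p := by omega
  have hpm : ¬ p ∣ m := Nat.not_dvd_of_pos_of_lt hmpos hmlt
  set β := α ^ m with hβ
  have hβsum : ∑ k ∈ Finset.range p, β ^ k = 0 := by
    have h := sum_pow_mul_eq hp α hαp hpm
    rw [hsum] at h
    calc ∑ k ∈ Finset.range p, β ^ k = ∑ k ∈ Finset.range p, α ^ (m * k) := by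
          simp [hβ, ← pow_mul]
      _ = 0 := h
  obtain ⟨t, ht⟩ := hodd
  set u := ∑ k ∈ Finset.range t, β ^ (2*k+1) with hu
  have hmain : (1 + β) * u = -1 := by
    have h1 : (1 + β) * u = ∑ k ∈ Finset.range t, (β^(2*k+1) + β^(2*k+2)) := by
      rw [hu, Finset.mul_sum]
      exact Finset.sum_congr rfl fun k _ => by ring
    rw [h1, sum_pairs]
    have h3 : ∑ k ∈ Finset.range p, β ^ k = 1 + ∑ x ∈ Finset.range (2*t), β^(x+1) := by
      rw [ht, Finset.sum_range_succ']
      simp [add_comm]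
    rw [hβsum] at h3
    linear_combination -h3
  have hunit1 : IsUnit (1 + β) :=
    IsUnit.of_mul_eq_one (-u) (by linear_combination -hmain)
  have hunit2 : IsUnit (α ^ i) := by
    apply IsUnit.of_mul_eq_one (α ^ (i * (p-1)))
    rw [← pow_add]
    have he : i + i * (p-1) = p * i := by
      cases p with
      | zero => omega
      | succ n => simp [Nat.succ_sub_one]; ring
    rw [he, pow_mul, hαp, one_pow]
  have hfinal : α ^ i + α ^ j = α ^ i * (1 + β) := by
    rw [mul_add, mul_one, hjm, pow_add, hβ]
  rw [hfinal]
  exact hunit2.mul hunit1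
end

section
/- (Lemma 1, correctness of the recursion) Let p be prime, R = GF(2)[x]/(M_p(x)), α the image of x, 1 ≤ j ≤ p−1. Given Y = Σ_{i=0}^{p−2} y_i α^i ∈ R, define y_{p−1} = 0 and ŷ_m = y_m + Σ_{i=0}^{p−1} y_i for 0 ≤ m ≤ p−1. Define bits x_m for 0 ≤ m ≤ p−1 by x_{p−1} := 0 and the recursion x_{⟨−uj−1⟩} = x_{⟨−(u−1)j−1⟩} + ŷ_{⟨−(u−1)j−1⟩} for u = 1, ..., p−1, where ⟨m⟩ denotes m mod p. Then X = Σ_{i=0}^{p−2} x_i α^i satisfies (1 + α^j) X = Y in R. -/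
lemma sum_zmod_eq_range' {p : ℕ} [NeZero p] {M : Type*} [AddCommMonoid M] (f : ZMod p → M) :
    ∑ m : ZMod p, f m = ∑ i ∈ Finset.range p, f (i : ZMod p) := by
  refine Finset.sum_nbij' (fun m => m.val) (fun i => (i : ZMod p)) ?_ ?_ ?_ ?_ ?_
  · intro m _; exact Finset.mem_range.mpr (ZMod.val_lt m)
  · intro i _; exact Finset.mem_univ _
  · intro m _; exact ZMod.natCast_rightInverse m
  · intro i hi; exact ZMod.val_natCast_of_lt (Finset.mem_range.mp hi)
  · intro m _; rw [ZMod.natCast_rightInverse m]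

/-- Lemma 1: correctness of the recursion solving (1+α^j)X = Y
in R = GF(2)[x]/(M_p(x)). Indices are taken mod p (elements of ZMod p), and
x_{p-1} = x_{-1} = 0. Then any family of bits x satisfying the recursion
x_{⟨-uj-1⟩} = x_{⟨-(u-1)j-1⟩} + ŷ_{⟨-(u-1)j-1⟩} yields a solution X. -/
theorem stmt_9 {p : ℕ} [Fact p.Prime] (hodd : Odd p)
    {j : ℕ} (hj1 : 1 ≤ j) (hj2 : j ≤ p - 1)
    (Mp : Polynomial (ZMod 2)) (hMp : Mp = ∑ i ∈ Finset.range p, Polynomial.X ^ i)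
    (α : Polynomial (ZMod 2) ⧸ Ideal.span {Mp})
    (hα : α = Ideal.Quotient.mk (Ideal.span {Mp}) Polynomial.X)
    (y : ZMod p → ZMod 2) (hylast : y (-1) = 0)
    (yhat : ZMod p → ZMod 2) (hyhat : ∀ m, yhat m = y m + ∑ i : ZMod p, y i)
    (x : ZMod p → ZMod 2) (hxlast : x (-1) = 0)
    (hrec : ∀ u : ℕ, 1 ≤ u → u ≤ p - 1 →
      x (-((u * j : ℕ) : ZMod p) - 1)
        = x (-(((u - 1) * j : ℕ) : ZMod p) - 1) + yhat (-(((u - 1) * j : ℕ) : ZMod p) - 1))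
    (X Y : Polynomial (ZMod 2) ⧸ Ideal.span {Mp})
    (hX : X = ∑ i ∈ Finset.range (p - 1), x (i : ZMod p) • α ^ i)
    (hY : Y = ∑ i ∈ Finset.range (p - 1), y (i : ZMod p) • α ^ i) :
    (1 + α ^ j) * X = Y := by
  have hp : p.Prime := Fact.out
  have hp1 : 1 ≤ p := hp.one_le
  have hp2 : 2 ≤ p := hp.two_le
  haveI : NeZero p := ⟨hp.ne_zero⟩
  have hjlt : j < p := by omega
  -- basic ring facts
  have hMp0 : (∑ i ∈ Finset.range p, α ^ i) = 0 := by
    have h : (Ideal.Quotient.mk (Ideal.span {Mp})) Mp = 0 :=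
      Ideal.Quotient.eq_zero_iff_mem.mpr (Ideal.mem_span_singleton_self Mp)
    rw [hα]
    simp only [← map_pow, ← map_sum, ← hMp]
    exact h
  have hαp : α ^ p = 1 := by
    have h1 := (geom_sum_mul α p).symm
    rw [hMp0, zero_mul] at h1
    exact sub_eq_zero.mp h1
  have hpow : ∀ n : ℕ, α ^ n = α ^ (n % p) := by
    intro n
    conv_lhs => rw [← Nat.div_add_mod n p]
    rw [pow_add, pow_mul, hαp, one_pow, one_mul]
  set S : ZMod 2 := ∑ i : ZMod p, y i with hS
  -- j is invertible mod p
  have hjne : (j : ZMod p) ≠ 0 := by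
    intro h
    have hd : p ∣ j := (ZMod.natCast_eq_zero_iff j p).mp h
    have := Nat.le_of_dvd (by omega) hd
    omega
  -- pointwise relation off the special index
  have key : ∀ m : ZMod p, m ≠ (j : ZMod p) - 1 → x (m - j) = x m + yhat m := by
    intro m hm
    set v : ZMod p := (-1 - m) * (j : ZMod p)⁻¹ with hv
    have hvj : v * j = -1 - m := by
      rw [hv, mul_assoc, inv_mul_cancel₀ hjne, mul_one]
    set w := v.val with hw
    have hwlt : w < p := ZMod.val_lt v
    have hwcast : (w : ZMod p) = v := ZMod.natCast_rightInverse v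
    have hwne : w ≠ p - 1 := by
      intro h
      apply hm
      have hv1 : v = -1 := by
        rw [← hwcast, h]
        push_cast [Nat.cast_sub hp1]
        simp
      linear_combination hvj - (j : ZMod p) * hv1
    have hr := hrec (w + 1) (by omega) (by omega)
    have e1 : (((w + 1 - 1) * j : ℕ) : ZMod p) = -1 - m := by
      push_cast [Nat.add_sub_cancel]
      rw [hwcast, hvj]
    have e2 : (((w + 1) * j : ℕ) : ZMod p) = -1 - m + j := by
      push_cast
      rw [hwcast]
      linear_combination hvj
    rw [e1, e2] at hr
    have e3 : -(-1 - m + (j : ZMod p)) - 1 = m - j := by ring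
    have e4 : -(-1 - m) - 1 = m := by ring
    rw [e3, e4] at hr
    exact hr
  -- derive the relation at all indices
  have hall : ∀ m : ZMod p, x m + x (m - j) = y m + S := by
    have hg0 : ∀ m : ZMod p, m ≠ (j : ZMod p) - 1 →
        x m + x (m - j) + (y m + S) = 0 := by
      intro m hm
      rw [key m hm, hyhat]
      exact (by decide : ∀ a b : ZMod 2, a + (a + b) + b = 0) _ _
    have hp2' : (p : ZMod 2) = 1 := by
      rw [← ZMod.natCast_mod p 2, Nat.odd_iff.mp hodd, Nat.cast_one]
    have hsum0 : ∑ m : ZMod p, (x m + x (m - j) + (y m + S)) = 0 := by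
      have h1 : ∑ m : ZMod p, x (m - j) = ∑ m : ZMod p, x m :=
        Fintype.sum_equiv (Equiv.subRight ((j : ZMod p))) _ _ (fun m => rfl)
      simp only [Finset.sum_add_distrib, h1, Finset.sum_const, Finset.card_univ, ZMod.card,
        nsmul_eq_mul, hp2', one_mul, ← hS]
      generalize (∑ m : ZMod p, x m) = a
      exact (by decide : ∀ a b : ZMod 2, a + a + (b + b) = 0) a S
    intro m
    by_cases hm : m = (j : ZMod p) - 1
    · have herase : ∑ n ∈ Finset.univ.erase m, (x n + x (n - j) + (y n + S)) = 0 := by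
        apply Finset.sum_eq_zero
        intro n hn
        exact hg0 n (by rw [← hm]; exact (Finset.mem_erase.mp hn).1)
      have h := Finset.add_sum_erase Finset.univ
        (fun n => x n + x (n - (j : ZMod p)) + (y n + S)) (Finset.mem_univ m)
      rw [herase, add_zero, hsum0] at h
      exact (by decide : ∀ a b : ZMod 2, a + b = 0 → a = b) _ _ h
    · exact (by decide : ∀ a b : ZMod 2, a + b = 0 → a = b) _ _ (hg0 m hm)
  -- full-range sum expressions
  have hlast : ((p - 1 : ℕ) : ZMod p) = -1 := by
    push_cast [Nat.cast_sub hp1]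
    simp
  have hrange : p - 1 + 1 = p := by omega
  have hXfull : X = ∑ m : ZMod p, x m • α ^ m.val := by
    have e1 := sum_zmod_eq_range' (fun m : ZMod p => x m • α ^ m.val)
    have e2 : ∑ i ∈ Finset.range p, x (i : ZMod p) • α ^ ((i : ZMod p)).val
        = ∑ i ∈ Finset.range (p - 1), x (i : ZMod p) • α ^ ((i : ZMod p)).val
          + x ((p - 1 : ℕ) : ZMod p) • α ^ (((p - 1 : ℕ) : ZMod p)).val := by
      rw [← Finset.sum_range_succ (fun i : ℕ => x (i : ZMod p) • α ^ ((i : ZMod p)).val), hrange]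
    rw [e1, e2, hlast, hxlast, zero_smul, add_zero, hX]
    refine Finset.sum_congr rfl fun i hi => ?_
    have hi' := Finset.mem_range.mp hi
    rw [ZMod.val_natCast_of_lt (by omega)]
  have hYfull : Y = ∑ m : ZMod p, y m • α ^ m.val := by
    have e1 := sum_zmod_eq_range' (fun m : ZMod p => y m • α ^ m.val)
    have e2 : ∑ i ∈ Finset.range p, y (i : ZMod p) • α ^ ((i : ZMod p)).val
        = ∑ i ∈ Finset.range (p - 1), y (i : ZMod p) • α ^ ((i : ZMod p)).val
          + y ((p - 1 : ℕ) : ZMod p) • α ^ (((p - 1 : ℕ) : ZMod p)).val := by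
      rw [← Finset.sum_range_succ (fun i : ℕ => y (i : ZMod p) • α ^ ((i : ZMod p)).val), hrange]
    rw [e1, e2, hlast, hylast, zero_smul, add_zero, hY]
    refine Finset.sum_congr rfl fun i hi => ?_
    have hi' := Finset.mem_range.mp hi
    rw [ZMod.val_natCast_of_lt (by omega)]
  have hA0 : ∑ m : ZMod p, α ^ m.val = 0 := by
    rw [sum_zmod_eq_range' (fun m : ZMod p => α ^ m.val), ← hMp0]
    refine Finset.sum_congr rfl fun i hi => ?_
    rw [ZMod.val_natCast_of_lt (Finset.mem_range.mp hi)]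
  have hAshift : ∀ m : ZMod p, α ^ j * α ^ m.val = α ^ (m + (j : ZMod p)).val := by
    intro m
    rw [ZMod.val_add, ← hpow, ZMod.val_natCast, pow_add, hpow j, mul_comm]
  -- the main computation
  have hshiftX : α ^ j * X = ∑ m : ZMod p, x (m - j) • α ^ m.val := by
    rw [hXfull, Finset.mul_sum]
    have h1 : ∀ m : ZMod p, α ^ j * (x m • α ^ m.val) = x m • α ^ (m + (j : ZMod p)).val := by
      intro m
      rw [mul_smul_comm, hAshift]
    rw [Finset.sum_congr rfl fun m _ => h1 m]
    refine Fintype.sum_equiv (Equiv.addRight ((j : ZMod p))) _ _ fun m => ?_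
    simp
  rw [add_mul, one_mul, hshiftX, hXfull, hYfull, ← Finset.sum_add_distrib]
  have h2 : ∀ m : ZMod p, x m • α ^ m.val + x (m - j) • α ^ m.val
      = y m • α ^ m.val + S • α ^ m.val := by
    intro m
    rw [← add_smul, ← add_smul, hall m]
  rw [Finset.sum_congr rfl fun m _ => h2 m, Finset.sum_add_distrib, ← Finset.smul_sum,
    hA0, smul_zero, add_zero]
end

section
/- Let p be prime and R = GF(2)[x]/(M_p(x)) with α the image of x. Let 1 ≤ r < k ≤ p and let (i_1, ..., i_{r−1}) be distinct indices in {1, ..., k−1} together with i_0 = 0. Then the r×r matrix over R with entries (α^{u · i_s})_{0≤u≤r−1, 0≤s≤r−1} is invertible over R. -/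
/-- If `∑_{j<p} α^j = 0` then `α^p = 1`. -/
lemma stmt11_pow_p_eq_one {R : Type*} [CommRing R] {p : ℕ} (α : R)
    (hsum : ∑ j ∈ Finset.range p, α ^ j = 0) : α ^ p = 1 := by
  have h := geom_sum_mul α p
  rw [hsum, zero_mul] at h
  have := h.symm
  rwa [sub_eq_zero] at this

lemma stmt11_sum_pow {p : ℕ} (hp : p.Prime) {R : Type*} [CommRing R] (α : R)
    (hsum : ∑ j ∈ Finset.range p, α ^ j = 0)
    {m : ℕ} (hm : ¬ p ∣ m) : ∑ j ∈ Finset.range p, α ^ (m * j) = 0 := by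
  haveI : Fact p.Prime := ⟨hp⟩
  have hαp : α ^ p = 1 := stmt11_pow_p_eq_one α hsum
  have hmod : ∀ n : ℕ, α ^ n = α ^ (n % p) := by
    intro n
    conv_lhs => rw [← Nat.mod_add_div n p, pow_add, pow_mul, hαp, one_pow, mul_one]
  set F : ZMod p → R := fun z => α ^ z.val with hF
  have hF' : ∀ n : ℕ, α ^ n = F (n : ZMod p) := by
    intro n; rw [hmod n, hF]; simp [ZMod.val_natCast]
  have hrange : ∀ G : ZMod p → R, ∑ j ∈ Finset.range p, G (j : ZMod p) = ∑ z : ZMod p, G z := by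
    intro G
    refine Finset.sum_nbij' (fun j => (j : ZMod p)) (fun z => z.val) ?_ ?_ ?_ ?_ ?_
    · intro j hj; exact Finset.mem_univ _
    · intro z hz; exact Finset.mem_range.mpr (ZMod.val_lt z)
    · intro j hj; exact ZMod.val_cast_of_lt (Finset.mem_range.mp hj)
    · intro z hz; exact ZMod.natCast_rightInverse z
    · intro j hj; rfl
  have hmne : (m : ZMod p) ≠ 0 := by
    rwa [Ne, ZMod.natCast_eq_zero_iff]
  calc ∑ j ∈ Finset.range p, α ^ (m * j)
      = ∑ j ∈ Finset.range p, (fun z => F ((m : ZMod p) * z)) ((j : ℕ) : ZMod p) := by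
        refine Finset.sum_congr rfl fun j _ => ?_
        simp only []
        rw [hF' (m * j)]; push_cast; ring_nf
    _ = ∑ z : ZMod p, F ((m : ZMod p) * z) := by exact hrange fun z => F ((m : ZMod p) * z)
    _ = ∑ z : ZMod p, F z := Equiv.sum_comp (Equiv.mulLeft₀ (m : ZMod p) hmne) F
    _ = ∑ j ∈ Finset.range p, F (j : ZMod p) := (hrange _).symm
    _ = ∑ j ∈ Finset.range p, α ^ j := Finset.sum_congr rfl fun j _ => (hF' j).symm
    _ = 0 := hsum

lemma stmt11_one_add_unit {p : ℕ} (hp : p.Prime) (hodd : Odd p) {R : Type*} [CommRing R] (α : R)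
    (hsum : ∑ j ∈ Finset.range p, α ^ j = 0)
    {m : ℕ} (hm0 : 0 < m) (hmp : m < p) : IsUnit (1 + α ^ m) := by
  have hαp : α ^ p = 1 := stmt11_pow_p_eq_one α hsum
  have hpm : ¬ p ∣ m := Nat.not_dvd_of_pos_of_lt hm0 hmp
  set y := α ^ m with hy
  have hyp : y ^ p = 1 := by rw [hy, ← pow_mul, mul_comm, pow_mul, hαp, one_pow]
  have hys : ∑ j ∈ Finset.range p, y ^ j = 0 := by
    have := stmt11_sum_pow hp α hsum hpm
    simpa [hy, ← pow_mul] using this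
  obtain ⟨q, hq⟩ := hodd
  refine IsUnit.of_mul_eq_one (∑ j ∈ Finset.range (q + 1), y ^ (2 * j)) ?_
  have key : ∀ n : ℕ, ∑ i ∈ Finset.range (2 * n), y ^ i
      = ∑ j ∈ Finset.range n, (y ^ (2 * j) + y ^ (2 * j + 1)) := by
    intro n
    induction n with
    | zero => simp
    | succ n ih =>
        have h2n : 2 * (n + 1) = (2 * n + 1) + 1 := by ring
        rw [h2n, Finset.sum_range_succ, Finset.sum_range_succ, ih, Finset.sum_range_succ,
          add_assoc]
  have expand : (1 + y) * ∑ j ∈ Finset.range (q + 1), y ^ (2 * j)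
      = ∑ j ∈ Finset.range (q + 1), (y ^ (2 * j) + y ^ (2 * j + 1)) := by
    rw [Finset.mul_sum]
    exact Finset.sum_congr rfl fun j _ => by ring
  rw [expand, ← key (q + 1)]
  have h2q : 2 * (q + 1) = p + 1 := by omega
  rw [h2q, Finset.sum_range_succ, hys, hyp, zero_add]

/-- the r×r Vandermonde-type matrix (α^{u·i_s}) over
R = GF(2)[x]/(M_p(x)) with i_0 = 0 and distinct i_s in {0,...,k-1}, k ≤ p,
is invertible over R. -/
theorem stmt_11 {p r k : ℕ} (hp : p.Prime) (hodd : Odd p)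
    (hr : 1 ≤ r) (hrk : r < k) (hkp : k ≤ p)
    (Mp : Polynomial (ZMod 2)) (hMp : Mp = ∑ i ∈ Finset.range p, Polynomial.X ^ i)
    (α : Polynomial (ZMod 2) ⧸ Ideal.span {Mp})
    (hα : α = Ideal.Quotient.mk (Ideal.span {Mp}) Polynomial.X)
    (i : Fin r → ℕ) (hi0 : i ⟨0, hr⟩ = 0) (hinj : Function.Injective i)
    (hibound : ∀ s, i s < k)
    (M : Matrix (Fin r) (Fin r) (Polynomial (ZMod 2) ⧸ Ideal.span {Mp}))
    (hM : ∀ u s, M u s = α ^ ((u : ℕ) * i s)) :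
    IsUnit M.det := by
  -- the defining relation
  have hsum : ∑ j ∈ Finset.range p, α ^ j = 0 := by
    rw [hα]
    have h0 : (Ideal.Quotient.mk (Ideal.span {Mp})) Mp = 0 := by
      simp [Ideal.Quotient.eq_zero_iff_mem, Ideal.mem_span_singleton]
    have h1 : (Ideal.Quotient.mk (Ideal.span {Mp})) Mp
        = ∑ j ∈ Finset.range p, (Ideal.Quotient.mk (Ideal.span {Mp})) Polynomial.X ^ j := by
      rw [hMp]; simp [map_sum, map_pow]
    rw [← h1]; exact h0
  have hαp : α ^ p = 1 := stmt11_pow_p_eq_one α hsum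
  have hαu : IsUnit α := by
    refine IsUnit.of_mul_eq_one (α ^ (p - 1)) ?_
    calc α * α ^ (p - 1) = α ^ (p - 1 + 1) := (pow_succ' α (p - 1)).symm
      _ = 1 := by rw [show p - 1 + 1 = p by omega, hαp]
  -- characteristic 2
  have htwo : (2 : Polynomial (ZMod 2) ⧸ Ideal.span {Mp}) = 0 := by
    have h := (map_ofNat (Ideal.Quotient.mk (Ideal.span {Mp})) 2).symm
    rw [h]
    simp [show (2 : Polynomial (ZMod 2)) = 0 from CharTwo.two_eq_zero]
  have negid : ∀ x : Polynomial (ZMod 2) ⧸ Ideal.span {Mp}, -x = x := by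
    intro x
    rw [neg_eq_iff_add_eq_zero, ← two_mul, htwo, zero_mul]
  -- differences of distinct powers are units
  have hdiff : ∀ a b : ℕ, a < p → b < p → a ≠ b → IsUnit (α ^ b - α ^ a) := by
    have main : ∀ a b : ℕ, b < p → a < b → IsUnit (α ^ b - α ^ a) := by
      intro a b hbp hab
      have h1 : α ^ b - α ^ a = α ^ a * (1 + α ^ (b - a)) := by
        rw [mul_add, mul_one, ← pow_add, show a + (b - a) = b by omega,
          sub_eq_add_neg, negid, add_comm]
      rw [h1]
      exact (hαu.pow a).mul (stmt11_one_add_unit hp hodd α hsum (by omega) (by omega))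
    intro a b hap hbp hab
    rcases lt_or_gt_of_ne hab with h | h
    · exact main a b hbp h
    · have hu := main b a hap h
      rw [show α ^ b - α ^ a = -(α ^ a - α ^ b) by ring]
      exact hu.neg
  -- M is the transpose of a Vandermonde matrix
  have hMt : M = Matrix.transpose (Matrix.vandermonde (fun s => α ^ i s)) := by
    ext u s
    rw [hM u s, Matrix.transpose_apply, Matrix.vandermonde_apply, ← pow_mul, mul_comm]
  rw [hMt, Matrix.det_transpose, Matrix.det_vandermonde]
  refine Finset.prod_induction _ IsUnit (fun a b ha hb => ha.mul hb) isUnit_one ?_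
  intro s _
  refine Finset.prod_induction _ IsUnit (fun a b ha hb => ha.mul hb) isUnit_one ?_
  intro t ht
  have hst : s < t := Finset.mem_Ioi.mp ht
  exact hdiff (i s) (i t) (lt_of_lt_of_le (hibound s) hkp) (lt_of_lt_of_le (hibound t) hkp)
    (fun h => hst.ne (hinj h))
end

section
/- (Perfect secrecy threshold) In the modified Shamir scheme with H the r×k Vandermonde parity-check matrix of an MDS code over GF(q), any coalition of m ≤ k−r−1 participants holding data symbols D_{j_1},...,D_{j_m} (indices in {1,...,k−1}), together with all r public parities D_k,...,D_{k+r−1}, sees a joint distribution of their known symbols that is identical for every possible value of the secret D_0 ∈ GF(q). Conversely, any k−r participants together with the parities determine D_0 uniquely. -/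
lemma aux_solve {F : Type*} [Field F] [Fintype F] [DecidableEq F] {r k : ℕ}
    (α : F) (H : Matrix (Fin r) (Fin k) F)
    (hH : ∀ u j, H u j = α ^ ((u : ℕ) * (j : ℕ)))
    (cols : Fin r → Fin k)
    (hdet : IsUnit (H.submatrix id cols).det) (b : Fin r → F) :
    ∃ v : Fin r → F, ∀ u : Fin r,
      ∑ i : Fin r, α ^ ((u : ℕ) * ((cols i : Fin k) : ℕ)) * v i = b u := by
  refine ⟨(H.submatrix id cols)⁻¹.mulVec b, fun u => ?_⟩
  have h1 : (H.submatrix id cols).mulVec ((H.submatrix id cols)⁻¹.mulVec b) = b := by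
    rw [Matrix.mulVec_mulVec, Matrix.mul_nonsing_inv _ hdet, Matrix.one_mulVec]
  have h2 := congrFun h1 u
  rw [Matrix.mulVec, dotProduct] at h2
  simpa [Matrix.submatrix, hH] using h2

lemma aux_unique {F : Type*} [Field F] [Fintype F] [DecidableEq F] {r k : ℕ}
    (α : F) (H : Matrix (Fin r) (Fin k) F)
    (hH : ∀ u j, H u j = α ^ ((u : ℕ) * (j : ℕ)))
    (cols : Fin r → Fin k)
    (hdet : IsUnit (H.submatrix id cols).det) (v : Fin r → F)
    (hv : ∀ u : Fin r, ∑ i : Fin r, α ^ ((u : ℕ) * ((cols i : Fin k) : ℕ)) * v i = 0) :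
    v = 0 := by
  have h1 : (H.submatrix id cols).mulVec v = 0 := by
    funext u
    rw [Matrix.mulVec, dotProduct]
    simpa [Matrix.submatrix, hH] using hv u
  have := congrArg (fun w => (H.submatrix id cols)⁻¹.mulVec w) h1
  simpa [Matrix.mulVec_mulVec, Matrix.nonsing_inv_mul _ hdet, Matrix.one_mulVec,
    Matrix.mulVec_zero] using this

/-- perfect secrecy threshold: any coalition of m ≤ k-r-1
participants together with the r public parities learns nothing about the
secret D_0 (the number of consistent completions is the same for every secret
value); conversely, any k-r participants together with the parities determine
the secret uniquely. -/
theorem stmt_16 {F : Type*} [Field F] [Fintype F] [DecidableEq F] {r k m : ℕ}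
    (hrk : r < k) (hk : 0 < k) (hm : m ≤ k - r - 1)
    (α : F) (H : Matrix (Fin r) (Fin k) F)
    (hH : ∀ u j, H u j = α ^ ((u : ℕ) * (j : ℕ)))
    (hMDS : ∀ cols : Fin r → Fin k, Function.Injective cols →
      IsUnit (H.submatrix id cols).det)
    (J : Finset (Fin k)) (hJ0 : (⟨0, hk⟩ : Fin k) ∉ J) (hJcard : J.card = m) :
    (∀ (obs : Fin k → F) (par : Fin r → F) (d d' : F),
      (Finset.univ.filter (fun D : Fin k → F =>
          D ⟨0, hk⟩ = d ∧ (∀ j ∈ J, D j = obs j) ∧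
          ∀ u : Fin r, ∑ j : Fin k, α ^ ((u : ℕ) * (j : ℕ)) * D j = par u)).card
        = (Finset.univ.filter (fun D : Fin k → F =>
          D ⟨0, hk⟩ = d' ∧ (∀ j ∈ J, D j = obs j) ∧
          ∀ u : Fin r, ∑ j : Fin k, α ^ ((u : ℕ) * (j : ℕ)) * D j = par u)).card)
    ∧ (∀ T : Finset (Fin k), (⟨0, hk⟩ : Fin k) ∉ T → T.card = k - r →
        ∀ D D' : Fin k → F, (∀ j ∈ T, D j = D' j) →
          (∀ u : Fin r, ∑ j : Fin k, α ^ ((u : ℕ) * (j : ℕ)) * D j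
            = ∑ j : Fin k, α ^ ((u : ℕ) * (j : ℕ)) * D' j) →
          D ⟨0, hk⟩ = D' ⟨0, hk⟩) := by
  set i0 : Fin k := ⟨0, hk⟩ with hi0
  constructor
  · -- secrecy part
    intro obs par d d'
    -- choose r columns avoiding insert i0 J
    obtain ⟨S, hSsub, hScard⟩ : ∃ S ⊆ (insert i0 J)ᶜ, S.card = r := by
      apply Finset.exists_subset_card_eq
      have h1 : (insert i0 J).card = m + 1 := by
        rw [Finset.card_insert_of_notMem hJ0, hJcard]
      have h2 := Finset.card_compl (insert i0 J)
      rw [h1, Fintype.card_fin] at h2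
      omega
    set cols : Fin r → Fin k := fun i => ((S.orderIsoOfFin hScard i : S) : Fin k) with hcols
    have hinj : Function.Injective cols := fun a b h =>
      (S.orderIsoOfFin hScard).injective (Subtype.ext h)
    have hnotmem : ∀ i, cols i ∉ insert i0 J := by
      intro i
      have : cols i ∈ S := (S.orderIsoOfFin hScard i).2
      exact Finset.mem_compl.mp (hSsub this)
    have hne0 : ∀ i, cols i ≠ i0 := fun i h => hnotmem i (by simp [h])
    have hnJ : ∀ i, cols i ∉ J := fun i h => hnotmem i (Finset.mem_insert_of_mem h)
    obtain ⟨v, hv⟩ := aux_solve α H hH cols (hMDS cols hinj) (fun _ => -1)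
    -- the kernel vector w
    set w : Fin k → F := fun j =>
      (if j = i0 then 1 else 0) + ∑ i : Fin r, if cols i = j then v i else 0 with hw
    have hw0 : w i0 = 1 := by
      simp only [hw]
      rw [Finset.sum_eq_zero (fun i _ => if_neg (hne0 i))]
      simp
    have hwJ : ∀ j ∈ J, w j = 0 := by
      intro j hj
      have hji : j ≠ i0 := fun h => hJ0 (h ▸ hj)
      simp only [hw]
      simp only [if_neg hji]
      rw [Finset.sum_eq_zero (fun i _ =>
        if_neg (show cols i ≠ j from fun h => hnJ i (by rwa [h])))]
      ring
    have hker : ∀ u : Fin r, ∑ j : Fin k, α ^ ((u : ℕ) * (j : ℕ)) * w j = 0 := by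
      intro u
      simp only [hw]
      simp only [mul_add, Finset.sum_add_distrib, mul_ite, mul_one, mul_zero,
        Finset.mul_sum]
      rw [Finset.sum_ite_eq' Finset.univ i0 (fun j => α ^ ((u : ℕ) * (j : ℕ)))]
      rw [Finset.sum_comm]
      have : ∀ i : Fin r, ∑ j : Fin k,
          (if cols i = j then α ^ ((u : ℕ) * (j : ℕ)) * v i else 0)
          = α ^ ((u : ℕ) * ((cols i : Fin k) : ℕ)) * v i := by
        intro i
        rw [Finset.sum_ite_eq Finset.univ (cols i)
          (fun j => α ^ ((u : ℕ) * (j : ℕ)) * v i)]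
        simp
      simp only [this]
      rw [hv u]
      simp [hi0]
    -- the shift bijection
    have key : ∀ c : F, ∀ D : Fin k → F, ∀ u : Fin r,
        ∑ j : Fin k, α ^ ((u : ℕ) * (j : ℕ)) * (D j + c * w j)
          = (∑ j : Fin k, α ^ ((u : ℕ) * (j : ℕ)) * D j) := by
      intro c D u
      have := hker u
      calc ∑ j : Fin k, α ^ ((u : ℕ) * (j : ℕ)) * (D j + c * w j)
          = (∑ j : Fin k, α ^ ((u : ℕ) * (j : ℕ)) * D j)
            + c * ∑ j : Fin k, α ^ ((u : ℕ) * (j : ℕ)) * w j := by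
            rw [Finset.mul_sum]
            rw [← Finset.sum_add_distrib]
            exact Finset.sum_congr rfl (fun j _ => by ring)
        _ = _ := by rw [this]; ring
    apply Finset.card_nbij' (fun D => fun j => D j + (d' - d) * w j)
      (fun D => fun j => D j + (d - d') * w j)
    · intro D hD
      simp only [Finset.mem_coe, Finset.mem_filter, Finset.mem_univ, true_and] at hD ⊢
      obtain ⟨h1, h2, h3⟩ := hD
      refine ⟨by rw [h1, hw0]; ring, fun j hj => by rw [h2 j hj, hwJ j hj]; ring,
        fun u => by rw [key]; exact h3 u⟩
    · intro D hD
      simp only [Finset.mem_coe, Finset.mem_filter, Finset.mem_univ, true_and] at hD ⊢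
      obtain ⟨h1, h2, h3⟩ := hD
      refine ⟨by rw [h1, hw0]; ring, fun j hj => by rw [h2 j hj, hwJ j hj]; ring,
        fun u => by rw [key]; exact h3 u⟩
    · intro D _; funext j; ring
    · intro D _; funext j; ring
  · -- uniqueness part
    intro T hT0 hTcard D D' hagree hpar
    have hTc : Tᶜ.card = r := by
      rw [Finset.card_compl, Fintype.card_fin, hTcard]; omega
    set C : Finset (Fin k) := Tᶜ with hC
    have hCc : C.card = r := hTc
    set cols : Fin r → Fin k := fun i => ((C.orderIsoOfFin hCc i : C) : Fin k) with hcols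
    have hinj : Function.Injective cols := fun a b h =>
      (C.orderIsoOfFin hCc).injective (Subtype.ext h)
    have himg : Finset.image cols Finset.univ = Tᶜ := by
      apply Finset.eq_of_subset_of_card_le
      · intro j hj
        simp only [Finset.mem_image] at hj
        obtain ⟨i, _, rfl⟩ := hj
        exact (C.orderIsoOfFin hCc i).2
      · rw [Finset.card_image_of_injective _ hinj, Finset.card_univ, Fintype.card_fin, hTc]
    set E : Fin k → F := fun j => D j - D' j with hE
    have hEz : ∀ j ∈ T, E j = 0 := fun j hj => by
      rw [hE]; simp [hagree j hj]
    have hEker : ∀ u : Fin r,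
        ∑ i : Fin r, α ^ ((u : ℕ) * ((cols i : Fin k) : ℕ)) * E (cols i) = 0 := by
      intro u
      have h1 : ∑ j : Fin k, α ^ ((u : ℕ) * (j : ℕ)) * E j = 0 := by
        rw [hE]
        simp only [mul_sub, Finset.sum_sub_distrib]
        rw [hpar u]; ring
      have h2 : ∑ j ∈ Tᶜ, α ^ ((u : ℕ) * (j : ℕ)) * E j = 0 := by
        have h3 := Finset.sum_add_sum_compl T (fun j => α ^ ((u : ℕ) * (j : ℕ)) * E j)
        have h4 : ∑ j ∈ T, α ^ ((u : ℕ) * (j : ℕ)) * E j = 0 :=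
          Finset.sum_eq_zero (fun j hj => by rw [hEz j hj, mul_zero])
        rw [h4, zero_add, h1] at h3
        exact h3
      rw [← himg, Finset.sum_image (fun a _ b _ h => hinj h)] at h2
      simpa using h2
    have := aux_unique α H hH cols (hMDS cols hinj) (fun i => E (cols i)) hEker
    have h0c : i0 ∈ Tᶜ := Finset.mem_compl.mpr hT0
    rw [← himg, Finset.mem_image] at h0c
    obtain ⟨i, _, hi⟩ := h0c
    have hz : E (cols i) = 0 := congrFun this i
    rw [hi, hE] at hz
    exact sub_eq_zero.mp hz
end
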